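/- In a truncated archimedean vector lattice, if f₁, …, f_m are elements of the range of the truncation satisfying f_n = (f_n + f_{n+1})̄ for all n < m, and g = f₁ + ⋯ + f_m, then f_n = (g ⊖ (n−1))̄ for all n ≤ m. -/

import Mathlib

/-- A truncation on a (lattice-ordered real) vector lattice `G`: a unary operation
`trunc` on the positive cone satisfying the axioms (T1)–(T3). -/
structure Truncation (G : Type*) [AddCommGroup G] [Lattice G] [Module ℝ G] where
  trunc : G → G
  /-- (T1): `g ⊓ h̄ ≤ ḡ ≤ g` for `g, h ≥ 0`. -/
  inf_trunc_le : ∀ g h : G, 0 ≤ g → 0 ≤ h → g ⊓ trunc h ≤ trunc g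
  trunc_le_self : ∀ g : G, 0 ≤ g → trunc g ≤ g
  /-- (T2): if `ḡ = 0` then `g = 0`. -/
  eq_zero_of_trunc_eq_zero : ∀ g : G, 0 ≤ g → trunc g = 0 → g = 0
  /-- (T3): if `n g = (n g)‾` for all `n` then `g = 0`. -/
  eq_zero_of_forall_trunc_eq : ∀ g : G, 0 ≤ g →
    (∀ n : ℕ, (n : ℝ) • g = trunc ((n : ℝ) • g)) → g = 0

namespace Truncation

variable {G : Type*} [AddCommGroup G] [Lattice G] [Module ℝ G]

/-- `g ∧ r := r • (g/r)‾` for real `r > 0` (and `g ∧ 0 := 0`). -/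
noncomputable def wedge (T : Truncation G) (g : G) (r : ℝ) : G :=
  r • T.trunc (r⁻¹ • g)

/-- `g ⊖ r := r • ((g/r) - (g/r)‾)` for real `r > 0`, and `g ⊖ 0 := g`. -/
noncomputable def ominus (T : Truncation G) (g : G) (r : ℝ) : G :=
  if r = 0 then g else r • (r⁻¹ • g - T.trunc (r⁻¹ • g))

end Truncation

/-!
Write `S k = f k + ⋯ + f (m - 1)`. From `(a + b̄)‾ = (a + b)‾` and `f k = (f k + f (k + 1))‾`,
a downward induction gives `(S k)‾ = f k`. For `n ≥ 1` split `g = s + S n` with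
`s = f 0 + ⋯ + f (n - 1)`; the `f k` decrease, so `n • f (n - 1) ≤ s ≤ n • f 0`. Then
`(g / n)‾ = s / n`: the fixed point `s / n ≤ f 0` lies below `g / n`, giving `≥`. Conversely,
`(f (n - 1) + S n)‾ = f (n - 1)` and (T1) make `(c - f (n - 1))⁺` disjoint from `S n` for every
fixed point `c`, and for `c = (g / n)‾` this forces `n • c ≤ s`. Hence `g ⊖ n = g - s = S n`.

The real scalars are not assumed compatible with the order, so all division by `n` is controlled
through the cancellation `n • x ≤ n • y → x ≤ y`, valid in every lattice-ordered group.
-/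

section LatticeOrderedGroup

variable {α : Type*} [AddCommGroup α] [Lattice α] [AddLeftMono α]

theorem inf_add_le_inf_add_inf {a b c : α} (ha : 0 ≤ a) (hb : 0 ≤ b) (hc : 0 ≤ c) :
    c ⊓ (a + b) ≤ c ⊓ a + c ⊓ b := by
  have hle_b : c ⊓ (a + b) ≤ c ⊓ a + b := by
    rw [inf_add]
    exact le_inf (inf_le_left.trans (le_add_of_nonneg_right hb)) inf_le_right
  have hle_c : c ⊓ (a + b) ≤ c ⊓ a + c :=
    inf_le_left.trans (le_add_of_nonneg_left (le_inf hc ha))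
  calc c ⊓ (a + b) ≤ (c ⊓ a + b) ⊓ (c ⊓ a + c) := le_inf hle_b hle_c
    _ = c ⊓ a + c ⊓ b := by rw [← add_inf, inf_comm b]

theorem inf_nsmul_eq_zero {a b : α} (ha : 0 ≤ a) (hb : 0 ≤ b) (hab : a ⊓ b = 0) (n : ℕ) :
    a ⊓ n • b = 0 := by
  induction n with
  | zero => simpa using inf_eq_right.mpr ha
  | succ n ih =>
    refine le_antisymm ?_ (le_inf ha (nsmul_nonneg hb _))
    calc a ⊓ (n + 1) • b = a ⊓ (n • b + b) := by rw [succ_nsmul]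
      _ ≤ a ⊓ n • b + a ⊓ b := inf_add_le_inf_add_inf (nsmul_nonneg hb n) hb ha
      _ = 0 := by rw [ih, hab, add_zero]

theorem nonneg_of_nsmul_nonneg {x : α} {n : ℕ} (hn : 0 < n) (h : 0 ≤ n • x) : 0 ≤ x := by
  have hpart : n • x⁻ ≤ n • x⁺ := by
    rwa [← posPart_sub_negPart x, nsmul_sub, sub_nonneg] at h
  have hdisj : x⁻ ⊓ n • x⁺ = 0 := inf_nsmul_eq_zero (negPart_nonneg x) (posPart_nonneg x)
    (by rw [inf_comm, posPart_inf_negPart_eq_zero]) n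
  have hle : x⁻ ≤ n • x⁻ := by
    simpa using nsmul_le_nsmul_left (negPart_nonneg x) (Nat.one_le_iff_ne_zero.mpr hn.ne')
  refine negPart_eq_zero.mp (le_antisymm ?_ (negPart_nonneg x))
  rw [← hdisj]
  exact le_inf le_rfl (hle.trans hpart)

theorem le_of_nsmul_le_nsmul {x y : α} {n : ℕ} (hn : 0 < n) (h : n • x ≤ n • y) :
    x ≤ y :=
  sub_nonneg.mp (nonneg_of_nsmul_nonneg hn (by rwa [nsmul_sub, sub_nonneg]))

end LatticeOrderedGroup

namespace Truncation

variable {G : Type*} [AddCommGroup G] [Lattice G] [Module ℝ G] (T : Truncation G)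

theorem trunc_mono {a b : G} (ha : 0 ≤ a) (hab : a ≤ b) : T.trunc a ≤ T.trunc b := by
  have h := T.inf_trunc_le b a (ha.trans hab) ha
  rwa [inf_eq_right.mpr ((T.trunc_le_self a ha).trans hab)] at h

theorem trunc_eq_self_of_le {a b : G} (ha : 0 ≤ a) (hb : T.trunc b = b) (hab : a ≤ b) :
    T.trunc a = a := by
  have h := T.inf_trunc_le a b ha (ha.trans hab)
  rw [hb, inf_eq_left.mpr hab] at h
  exact le_antisymm (T.trunc_le_self a ha) h

theorem trunc_nonneg (h0 : T.trunc 0 = 0) {a : G} (ha : 0 ≤ a) : 0 ≤ T.trunc a :=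
  h0 ▸ T.trunc_mono le_rfl ha

theorem trunc_trunc (h0 : T.trunc 0 = 0) {a : G} (ha : 0 ≤ a) :
    T.trunc (T.trunc a) = T.trunc a := by
  refine le_antisymm (T.trunc_le_self _ (T.trunc_nonneg h0 ha)) ?_
  simpa using T.inf_trunc_le (T.trunc a) a (T.trunc_nonneg h0 ha) ha

theorem trunc_sup_eq_self {a b : G} (ha : 0 ≤ a) (hb : 0 ≤ b) (hta : T.trunc a = a)
    (htb : T.trunc b = b) : T.trunc (a ⊔ b) = a ⊔ b := by
  have hab : 0 ≤ a ⊔ b := ha.trans le_sup_left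
  refine le_antisymm (T.trunc_le_self _ hab) (sup_le ?_ ?_)
  · simpa [hta] using T.inf_trunc_le (a ⊔ b) a hab ha
  · simpa [htb] using T.inf_trunc_le (a ⊔ b) b hab hb

theorem ominus_natCast (g : G) (n : ℕ) :
    T.ominus g n = g - n • T.trunc ((n : ℝ)⁻¹ • g) := by
  rcases eq_or_ne n 0 with rfl | hn
  · simp [ominus]
  · have hn' : (n : ℝ) ≠ 0 := Nat.cast_ne_zero.mpr hn
    rw [ominus, if_neg hn', smul_sub, smul_inv_smul₀ hn', Nat.cast_smul_eq_nsmul]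

variable [AddLeftMono G]

theorem trunc_add_trunc (h0 : T.trunc 0 = 0) {a b : G} (ha : 0 ≤ a) (hb : 0 ≤ b) :
    T.trunc (a + T.trunc b) = T.trunc (a + b) := by
  have htb := T.trunc_nonneg h0 hb
  refine le_antisymm
    (T.trunc_mono (add_nonneg ha htb) (add_le_add_right (T.trunc_le_self b hb) a)) ?_
  have hle : T.trunc (a + b) ≤ a + T.trunc b := by
    rw [← sub_le_iff_le_add']
    refine le_trans (le_inf ?_ (sub_le_self _ ha)) (T.inf_trunc_le b (a + b) hb (add_nonneg ha hb))
    exact sub_le_iff_le_add'.mpr (T.trunc_le_self _ (add_nonneg ha hb))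
  simpa [inf_eq_right.mpr hle] using
    T.inf_trunc_le (a + T.trunc b) (a + b) (add_nonneg ha htb) (add_nonneg ha hb)

theorem le_of_trunc_add_eq {a b : G} (ha : 0 ≤ a) (hb : 0 ≤ b) (htb : T.trunc b = b)
    (hab : T.trunc (a + b) = a) : b ≤ a := by
  simpa [htb, hab, inf_eq_right.mpr (le_add_of_nonneg_left ha)] using
    T.inf_trunc_le (a + b) b (add_nonneg ha hb) hb

theorem posPart_sub_inf_eq_zero {a b c : G} (ha : 0 ≤ a) (hta : T.trunc a = a) (hb : 0 ≤ b)
    (hab : T.trunc (a + b) = a) (hc : 0 ≤ c) (htc : T.trunc c = c) : (c - a)⁺ ⊓ b = 0 := by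
  -- (T1) for `a + b` against the fixed point `c ⊔ a = a + (c - a)⁺`
  have h := T.inf_trunc_le (a + b) (c ⊔ a) (add_nonneg ha hb) (hc.trans le_sup_left)
  rw [T.trunc_sup_eq_self hc ha htc hta, hab, sup_eq_add_posPart_sub, ← add_inf] at h
  refine le_antisymm ?_ (le_inf (posPart_nonneg _) hb)
  rw [inf_comm]
  simpa using h

theorem nsmul_le_of_trunc_add_eq {a b c s : G} {n : ℕ} (ha : 0 ≤ a) (hta : T.trunc a = a)
    (hb : 0 ≤ b) (hab : T.trunc (a + b) = a) (hc : 0 ≤ c) (htc : T.trunc c = c)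
    (has : n • a ≤ s) (hcs : n • c ≤ s + b) : n • c ≤ s := by
  have hdisj : b ⊓ n • (c - a)⁺ = 0 := inf_nsmul_eq_zero hb (posPart_nonneg _)
    (by rw [inf_comm, T.posPart_sub_inf_eq_zero ha hta hb hab hc htc]) n
  have hle_b : n • c - s ≤ b := sub_le_iff_le_add'.mpr hcs
  have hle_pos : n • c - s ≤ n • (c - a)⁺ :=
    calc n • c - s ≤ n • c - n • a := sub_le_sub_left has _
      _ = n • (c - a) := (nsmul_sub c a n).symm
      _ ≤ n • (c - a)⁺ := nsmul_le_nsmul_right (le_posPart _) n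
  exact sub_nonpos.mp (hdisj ▸ le_inf hle_b hle_pos)

theorem nsmul_trunc_eq {a b e s u : G} {n : ℕ} (hn : 0 < n) (ha : 0 ≤ a) (hta : T.trunc a = a)
    (hb : 0 ≤ b) (hab : T.trunc (a + b) = a) (hte : T.trunc e = e) (has : n • a ≤ s)
    (hse : s ≤ n • e) (hu : n • u = s + b) : n • T.trunc u = s := by
  have h0 : T.trunc 0 = 0 := T.trunc_eq_self_of_le le_rfl hta ha
  set t : G := (n : ℝ)⁻¹ • s
  have hts : n • t = s := by
    rw [← Nat.cast_smul_eq_nsmul ℝ, smul_inv_smul₀ (Nat.cast_ne_zero.mpr hn.ne')]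
  have hs : 0 ≤ s := (nsmul_nonneg ha n).trans has
  have hu0 : 0 ≤ u := nonneg_of_nsmul_nonneg hn (hu ▸ add_nonneg hs hb)
  have ht0 : 0 ≤ t := nonneg_of_nsmul_nonneg hn (hts ▸ hs)
  have htt : T.trunc t = t :=
    T.trunc_eq_self_of_le ht0 hte (le_of_nsmul_le_nsmul hn (hts ▸ hse))
  have htu : t ≤ T.trunc u := htt ▸ T.trunc_mono ht0
    (le_of_nsmul_le_nsmul hn (by rw [hts, hu]; exact le_add_of_nonneg_right hb))
  refine le_antisymm ?_ (hts ▸ nsmul_le_nsmul_right htu n)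
  refine T.nsmul_le_of_trunc_add_eq ha hta hb hab (T.trunc_nonneg h0 hu0) (T.trunc_trunc h0 hu0)
    has ?_
  exact hu ▸ nsmul_le_nsmul_right (T.trunc_le_self u hu0) n

theorem trunc_sum_Ico_eq {m : ℕ} {f : ℕ → G} (hf_pos : ∀ n, n < m → 0 ≤ f n)
    (hf_trunc : ∀ n, n < m → T.trunc (f n) = f n)
    (hgood : ∀ n, n + 1 < m → f n = T.trunc (f n + f (n + 1))) :
    ∀ k, k < m → T.trunc (∑ i ∈ Finset.Ico k m, f i) = f k := by
  suffices ∀ d k, k + d + 1 = m → T.trunc (∑ i ∈ Finset.Ico k m, f i) = f k from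
    fun k hk => this (m - k - 1) k (by omega)
  intro d
  induction d with
  | zero =>
    rintro k rfl
    simpa using hf_trunc k (by omega)
  | succ d ih =>
    intro k hk
    have h0 : T.trunc 0 = 0 :=
      T.trunc_eq_self_of_le le_rfl (hf_trunc k (by omega)) (hf_pos k (by omega))
    have htail : 0 ≤ ∑ i ∈ Finset.Ico (k + 1) m, f i :=
      Finset.sum_nonneg fun i hi => hf_pos i (Finset.mem_Ico.mp hi).2
    rw [Finset.sum_eq_sum_Ico_succ_bot (by omega),
      ← T.trunc_add_trunc h0 (hf_pos k (by omega)) htail, ih (k + 1) (by omega),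
      ← hgood k (by omega)]

theorem antitoneOn_of_trunc_add_eq {m : ℕ} {f : ℕ → G} (hf_pos : ∀ n, n < m → 0 ≤ f n)
    (hf_trunc : ∀ n, n < m → T.trunc (f n) = f n)
    (hgood : ∀ n, n + 1 < m → f n = T.trunc (f n + f (n + 1))) :
    AntitoneOn f (Set.Iio m) :=
  antitoneOn_of_add_one_le Set.ordConnected_Iio fun k _ hk hk1 =>
    T.le_of_trunc_add_eq (hf_pos k hk) (hf_pos (k + 1) hk1) (hf_trunc (k + 1) hk1)
      (hgood k hk1).symm

end Truncation

theorem stmt7_general {G : Type*} [AddCommGroup G] [Lattice G] [Module ℝ G]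
    [CovariantClass G G (· + ·) (· ≤ ·)]
    (T : Truncation G) (m : ℕ) (f : ℕ → G)
    (hf_pos : ∀ n, n < m → 0 ≤ f n)
    (hf_trunc : ∀ n, n < m → T.trunc (f n) = f n)
    (hgood : ∀ n, n + 1 < m → f n = T.trunc (f n + f (n + 1)))
    (g : G) (hg : g = ∑ n ∈ Finset.range m, f n) :
    ∀ n, n < m → f n = T.trunc (T.ominus g n) := by
  intro n hn
  have hsplit := Finset.sum_range_add_sum_Ico f hn.le
  have htail := T.trunc_sum_Ico_eq hf_pos hf_trunc hgood
  suffices n • T.trunc ((n : ℝ)⁻¹ • g) = ∑ i ∈ Finset.range n, f i by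
    rw [T.ominus_natCast, this, hg, ← hsplit, add_sub_cancel_left, htail n hn]
  rcases n.eq_zero_or_pos with rfl | hn0
  · simp
  have hanti := T.antitoneOn_of_trunc_add_eq hf_pos hf_trunc hgood
  have hbounds : ∀ i ∈ Finset.range n, f (n - 1) ≤ f i ∧ f i ≤ f 0 := fun i hi =>
    have hi : i < n := Finset.mem_range.mp hi
    ⟨hanti (Set.mem_Iio.mpr (by omega)) (Set.mem_Iio.mpr (by omega)) (by omega),
      hanti (Set.mem_Iio.mpr (by omega)) (Set.mem_Iio.mpr (by omega)) (Nat.zero_le i)⟩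
  have hab : T.trunc (f (n - 1) + ∑ i ∈ Finset.Ico n m, f i) = f (n - 1) := by
    have hsucc := Finset.sum_eq_sum_Ico_succ_bot (show n - 1 < m by omega) f
    rw [Nat.sub_add_cancel hn0] at hsucc
    rw [← hsucc, htail (n - 1) (by omega)]
  refine T.nsmul_trunc_eq hn0 (hf_pos _ (by omega)) (hf_trunc _ (by omega))
    (Finset.sum_nonneg fun i hi => hf_pos i (Finset.mem_Ico.mp hi).2) hab (hf_trunc 0 (by omega))
    (by simpa using Finset.card_nsmul_le_sum _ _ _ fun i hi => (hbounds i hi).1)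
    (by simpa using Finset.sum_le_card_nsmul _ _ _ fun i hi => (hbounds i hi).2) ?_
  rw [← Nat.cast_smul_eq_nsmul ℝ, smul_inv_smul₀ (Nat.cast_ne_zero.mpr hn0.ne'), hg, hsplit]

/-- If `f 0, …, f (m-1)` lie in the range of the truncation and satisfy
`f n = (f n + f (n+1))‾` for all `n` with `n + 1 < m`, and
`g = f 0 + ⋯ + f (m-1)`, then `f n = (g ⊖ n)‾` for all `n < m`. -/
theorem stmt7 {G : Type*} [AddCommGroup G] [Lattice G] [Module ℝ G]
    [CovariantClass G G (· + ·) (· ≤ ·)]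
    (arch : ∀ g h : G, 0 ≤ g → (∀ n : ℕ, n • g ≤ h) → g = 0)
    (T : Truncation G) (m : ℕ) (f : ℕ → G)
    (hf_pos : ∀ n, n < m → 0 ≤ f n)
    (hf_trunc : ∀ n, n < m → T.trunc (f n) = f n)
    (hgood : ∀ n, n + 1 < m → f n = T.trunc (f n + f (n + 1)))
    (g : G) (hg : g = ∑ n ∈ Finset.range m, f n) :
    ∀ n, n < m → f n = T.trunc (T.ominus g n) :=
  stmt7_general T m f hf_pos hf_trunc hgood g hg
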